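/- Let ψ : Matrix A A ℂ → Matrix B B ℂ and φ : Matrix A A ℂ → Matrix C C ℂ be quantum channels. If ψ and φ are compatible and there exists a quantum channel θ : Matrix B B ℂ → Matrix C C ℂ with φ = θ ∘ ψ (i.e. ψ divides φ), then φ is anti-degradable: there exist a finite nonempty type E, a Stinespring dilation of φ with environment E with associated complementary channel φᶜ : Matrix A A ℂ → Matrix E E ℂ, and a quantum channel Λ : Matrix E E ℂ → Matrix C C ℂ such that φ = Λ ∘ φᶜ. (Proposition 1.) -/

import Mathlib

open Matrix Kronecker
open scoped ComplexOrder

noncomputable section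

variable {A B C E : Type*}

/-- Partial trace over the second (right) tensor factor. -/
def trRight [Fintype C] (M : Matrix (B × C) (B × C) ℂ) : Matrix B B ℂ :=
  Matrix.of fun b b' => ∑ c, M (b, c) (b', c)

/-- Partial trace over the first (left) tensor factor. -/
def trLeft [Fintype B] (M : Matrix (B × C) (B × C) ℂ) : Matrix C C ℂ :=
  Matrix.of fun c c' => ∑ b, M (b, c) (b, c')

/-- Complete positivity of a map on matrices. -/
def IsCompletelyPositive [Fintype A] [Fintype B]
    (Φ : Matrix A A ℂ → Matrix B B ℂ) : Prop :=
  ∀ (n : Type) [Fintype n], ∀ M : Matrix (n × A) (n × A) ℂ, M.PosSemidef →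
    (Matrix.of fun p q : n × B =>
      Φ (Matrix.of fun a a' => M (p.1, a) (q.1, a')) p.2 q.2).PosSemidef

/-- A quantum channel: a linear, completely positive, trace-preserving map. -/
def IsQuantumChannel [Fintype A] [Fintype B] (Φ : Matrix A A ℂ → Matrix B B ℂ) : Prop :=
  IsLinearMap ℂ Φ ∧ IsCompletelyPositive Φ ∧ ∀ ρ : Matrix A A ℂ, (Φ ρ).trace = ρ.trace

/-- Compatibility of two channels: existence of a compatibilizer. -/
def Compatible [Fintype A] [Fintype B] [Fintype C]
    (ψ : Matrix A A ℂ → Matrix B B ℂ) (φ : Matrix A A ℂ → Matrix C C ℂ) : Prop :=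
  ∃ θ : Matrix A A ℂ → Matrix (B × C) (B × C) ℂ,
    IsQuantumChannel θ ∧ ψ = trRight ∘ θ ∧ φ = trLeft ∘ θ

/-- `ψ` divides `φ`: existence of a quotient channel. -/
def Divides [Fintype A] [Fintype B] [Fintype C]
    (ψ : Matrix A A ℂ → Matrix B B ℂ) (φ : Matrix A A ℂ → Matrix C C ℂ) : Prop :=
  ∃ θ' : Matrix B B ℂ → Matrix C C ℂ, IsQuantumChannel θ' ∧ φ = θ' ∘ ψ

/-- `V` is a Stinespring dilation (with environment `E`) of the channel `ψ`. -/
def IsStinespring [Fintype A] [Fintype B] [Fintype E] [DecidableEq A]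
    (ψ : Matrix A A ℂ → Matrix B B ℂ) (V : Matrix (B × E) A ℂ) : Prop :=
  Vᴴ * V = 1 ∧ ∀ ρ : Matrix A A ℂ, ψ ρ = trRight (V * ρ * Vᴴ)

/-- The complementary channel associated with the dilation `V`. -/
def complementary [Fintype A] [Fintype B] [Fintype E]
    (V : Matrix (B × E) A ℂ) (ρ : Matrix A A ℂ) : Matrix E E ℂ :=
  trLeft (V * ρ * Vᴴ)


/-- `φ` is anti-degradable with respect to some Stinespring dilation with environment `E`. -/
def AntiDegradableWith {A C : Type*} [Fintype A] [Fintype C] [DecidableEq A]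
    (φ : Matrix A A ℂ → Matrix C C ℂ) (E : Type) [Fintype E] : Prop :=
  Nonempty E ∧
  ∃ V : Matrix (C × E) A ℂ, IsStinespring φ V ∧
    ∃ Lam : Matrix E E ℂ → Matrix C C ℂ, IsQuantumChannel Lam ∧
      φ = Lam ∘ complementary V

section MyAux

lemma psd_sum {n ι : Type*} [Fintype n] (s : Finset ι) (f : ι → Matrix n n ℂ)
    (h : ∀ i ∈ s, (f i).PosSemidef) : (∑ i ∈ s, f i).PosSemidef := by
  classical
  induction s using Finset.cons_induction with
  | empty => simpa using (Matrix.PosSemidef.zero (n := n) (R := ℂ))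
  | cons a s' ha ih =>
      rw [Finset.sum_cons]
      exact (h a (Finset.mem_cons_self a s')).add
        (ih fun i hi => h i (Finset.mem_cons_of_mem hi))

lemma cp_comp {A B C : Type*} [Fintype A] [Fintype B] [Fintype C]
    {Φ₁ : Matrix A A ℂ → Matrix B B ℂ} {Φ₂ : Matrix B B ℂ → Matrix C C ℂ}
    (h1 : IsCompletelyPositive Φ₁) (h2 : IsCompletelyPositive Φ₂) :
    IsCompletelyPositive (fun ρ => Φ₂ (Φ₁ ρ)) := by
  intro n _ M hM
  have h := h2 n _ (h1 n M hM)
  have hEq : (Matrix.of fun p q : n × C =>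
      Φ₂ (Matrix.of fun b b' =>
        (Matrix.of fun p' q' : n × B =>
          Φ₁ (Matrix.of fun a a' => M (p'.1, a) (q'.1, a')) p'.2 q'.2) (p.1, b) (q.1, b')) p.2 q.2)
      = (Matrix.of fun p q : n × C =>
        Φ₂ (Φ₁ (Matrix.of fun a a' => M (p.1, a) (q.1, a'))) p.2 q.2) := by
    ext p q
    simp only [Matrix.of_apply]
    congr 1
  rw [hEq] at h
  exact h

lemma cp_tensor_right {B C D : Type*} [Fintype B] [Fintype C] [Fintype D]
    (θ : Matrix B B ℂ → Matrix C C ℂ) (hθ : IsCompletelyPositive θ) :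
    IsCompletelyPositive (fun M : Matrix (B × D) (B × D) ℂ =>
      Matrix.of fun p q : C × D => θ (Matrix.of fun b b' => M (b, p.2) (b', q.2)) p.1 q.1) := by
  intro n _ M hM
  classical
  set k := Fintype.card D with hk
  let ε : Fin k ≃ D := (Fintype.equivFin D).symm
  let g : (n × Fin k) × B → n × (B × D) := fun r => (r.1.1, (r.2, ε r.1.2))
  have hM' : (M.submatrix g g).PosSemidef := hM.submatrix g
  have hN := hθ (n × Fin k) (M.submatrix g g) hM'
  let h : n × (C × D) → (n × Fin k) × C := fun r => ((r.1, ε.symm r.2.2), r.2.1)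
  have hEq : (Matrix.of fun p q : n × (C × D) =>
      (fun M : Matrix (B × D) (B × D) ℂ =>
        Matrix.of fun p q : C × D => θ (Matrix.of fun b b' => M (b, p.2) (b', q.2)) p.1 q.1)
        (Matrix.of fun a a' => M (p.1, a) (q.1, a')) p.2 q.2)
      = (Matrix.of fun p q : (n × Fin k) × C =>
          θ (Matrix.of fun b b' => (M.submatrix g g) (p.1, b) (q.1, b')) p.2 q.2).submatrix h h := by
    ext ⟨i, c, d⟩ ⟨j, c', d'⟩
    simp only [Matrix.of_apply, Matrix.submatrix_apply, h, g]
    congr 2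
    · ext b b'
      simp [Equiv.apply_symm_apply]
  rw [hEq]
  exact hN.submatrix h

lemma channel_reindexed_trRight {D G : Type*} [Fintype D] [Fintype G] {k : ℕ}
    (ε : Fin k ≃ D) :
    IsQuantumChannel (fun M : Matrix (Fin k × G) (Fin k × G) ℂ =>
      Matrix.of fun d d' : D => ∑ g, M (ε.symm d, g) (ε.symm d', g)) := by
  classical
  refine ⟨⟨fun x y => ?_, fun c x => ?_⟩, ?_, ?_⟩
  · ext d d'; simp [Finset.sum_add_distrib]
  · ext d d'; simp [Finset.mul_sum]
  · intro n _ M hM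
    have hEq : (Matrix.of fun p q : n × D =>
        (fun M : Matrix (Fin k × G) (Fin k × G) ℂ =>
          Matrix.of fun d d' : D => ∑ g, M (ε.symm d, g) (ε.symm d', g))
          (Matrix.of fun a a' => M (p.1, a) (q.1, a')) p.2 q.2)
        = ∑ g : G, M.submatrix (fun r : n × D => (r.1, (ε.symm r.2, g)))
            (fun r : n × D => (r.1, (ε.symm r.2, g))) := by
      ext ⟨i, d⟩ ⟨j, d'⟩
      simp [Matrix.sum_apply]
    rw [hEq]
    exact psd_sum _ _ fun g _ => hM.submatrix _
  · intro ρ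
    simp only [Matrix.trace, Matrix.diag, Matrix.of_apply]
    rw [Fintype.sum_bijective ε.symm ε.symm.bijective _
      (fun p : Fin k => ∑ g, ρ (p, g) (p, g)) (fun d => rfl)]
    exact (Fintype.sum_prod_type (fun x : Fin k × G => ρ x x)).symm

lemma exists_kraus {A X : Type*} [Fintype A] [Fintype X] [DecidableEq A]
    (Θ : Matrix A A ℂ → Matrix X X ℂ) (hΘ : IsQuantumChannel Θ) :
    ∃ (m : ℕ) (K : Fin m → Matrix X A ℂ),
      (∀ (ρ : Matrix A A ℂ) (x x' : X), Θ ρ x x' = ∑ i, (K i * ρ * (K i)ᴴ) x x') ∧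
      ∑ i, (K i)ᴴ * K i = 1 := by
  classical
  set k := Fintype.card A with hk
  let ε : Fin k ≃ A := (Fintype.equivFin A).symm
  let v : Fin k × A → ℂ := fun p => if ε p.1 = p.2 then 1 else 0
  let W : Matrix Unit (Fin k × A) ℂ := Matrix.of fun _ p => star (v p)
  have hMv : (Matrix.of fun p q : Fin k × A => v p * star (v q)).PosSemidef := by
    have hW : (Matrix.of fun p q : Fin k × A => v p * star (v q)) = Wᴴ * W := by
      ext p q
      simp [W, Matrix.mul_apply, Matrix.conjTranspose_apply, mul_comm]
    rw [hW]
    exact Matrix.posSemidef_conjTranspose_mul_self W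
  have hN := hΘ.2.1 (Fin k) _ hMv
  obtain ⟨Bm, hBm⟩ : ∃ Bm : Matrix (Fin k × X) (Fin k × X) ℂ, _ = Bmᴴ * Bm := by
    open scoped MatrixOrder Matrix.Norms.L2Operator in
    exact CStarAlgebra.nonneg_iff_eq_star_mul_self.mp hN.nonneg
  let K₀ : Fin k × X → Matrix X A ℂ := fun f => Matrix.of fun x a => star (Bm f (ε.symm a, x))
  have hblock : ∀ i j : Fin k,
      (Matrix.of fun b b' : A => v (i, b) * star (v (j, b')))
        = Matrix.single (ε i) (ε j) (1 : ℂ) := by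
    intro i j; ext a a'
    simp only [Matrix.of_apply, Matrix.single, v]
    by_cases h1 : ε i = a <;> by_cases h2 : ε j = a' <;> simp [h1, h2]
  have hE : ∀ (a a' : A) (x x' : X),
      Θ (Matrix.single a a' (1 : ℂ)) x x'
        = ∑ f : Fin k × X, K₀ f x a * star (K₀ f x' a') := by
    intro a a' x x'
    have h1 : Θ (Matrix.single a a' (1 : ℂ)) x x'
        = (Matrix.of fun p q : Fin k × X =>
            Θ (Matrix.of fun b b' : A =>
              (Matrix.of fun p q : Fin k × A => v p * star (v q)) (p.1, b) (q.1, b')) p.2 q.2)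
          (ε.symm a, x) (ε.symm a', x') := by
      simp only [Matrix.of_apply]
      rw [hblock, Equiv.apply_symm_apply, Equiv.apply_symm_apply]
    rw [h1, hBm]
    simp [Matrix.mul_apply, Matrix.conjTranspose_apply, K₀]
  have hrep : ∀ (ρ : Matrix A A ℂ) (x x' : X),
      Θ ρ x x' = ∑ f : Fin k × X, (K₀ f * ρ * (K₀ f)ᴴ) x x' := by
    intro ρ x x'
    have hlin : Θ ρ x x'
        = ∑ a : A, ∑ a' : A, ρ a a' * Θ (Matrix.single a a' (1 : ℂ)) x x' := by
      conv_lhs => rw [Matrix.matrix_eq_sum_single ρ]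
      rw [show Θ = ⇑(IsLinearMap.mk' Θ hΘ.1) from rfl]
      rw [map_sum]
      rw [Matrix.sum_apply]
      refine Finset.sum_congr rfl fun a _ => ?_
      rw [map_sum, Matrix.sum_apply]
      refine Finset.sum_congr rfl fun a' _ => ?_
      rw [show Matrix.single a a' (ρ a a') = ρ a a' • Matrix.single a a' (1 : ℂ) by
        rw [Matrix.smul_single, smul_eq_mul, mul_one]]
      simp only [LinearMap.map_smul, Matrix.smul_apply, smul_eq_mul]
    have swap3 : ∀ G : A → A → (Fin k × X) → ℂ,
        ∑ a : A, ∑ a' : A, ∑ f : Fin k × X, G a a' f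
          = ∑ f : Fin k × X, ∑ a : A, ∑ a' : A, G a a' f := by
      intro G
      rw [show (∑ a : A, ∑ a' : A, ∑ f : Fin k × X, G a a' f)
          = ∑ a : A, ∑ f : Fin k × X, ∑ a' : A, G a a' f from
        Finset.sum_congr rfl fun a _ => Finset.sum_comm]
      exact Finset.sum_comm
    have e1 : ∀ f : Fin k × X, (K₀ f * ρ * (K₀ f)ᴴ) x x'
        = ∑ a : A, ∑ a' : A, ρ a a' * (K₀ f x a * star (K₀ f x' a')) := by
      intro f
      simp only [Matrix.mul_apply, Matrix.conjTranspose_apply, Finset.sum_mul]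
      rw [Finset.sum_comm]
      exact Finset.sum_congr rfl fun a _ => Finset.sum_congr rfl fun a' _ => by ring
    rw [hlin]
    simp only [hE, e1, Finset.mul_sum]
    exact swap3 _
  have hiso : ∑ f : Fin k × X, (K₀ f)ᴴ * K₀ f = 1 := by
    ext a a'
    have h1 := hΘ.2.2 (Matrix.single a' a (1 : ℂ))
    have h2 : (Θ (Matrix.single a' a (1 : ℂ))).trace
        = ∑ f : Fin k × X, ((K₀ f)ᴴ * K₀ f) a a' := by
      simp only [Matrix.trace, Matrix.diag]
      simp only [hE]
      rw [Finset.sum_comm]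
      simp only [Matrix.mul_apply, Matrix.conjTranspose_apply]
      exact Finset.sum_congr rfl fun f _ => Finset.sum_congr rfl fun xx _ => by ring
    have h3 : (Matrix.single a' a (1 : ℂ)).trace = (1 : Matrix A A ℂ) a a' := by
      by_cases h : a' = a
      · subst h; simp [Matrix.trace, Matrix.diag, Matrix.single, Matrix.one_apply]
      · have h0 : ∀ i : A, ¬(a' = i ∧ a = i) := by
          rintro i ⟨rfl, rfl⟩; exact h rfl
        have h1' : a ≠ a' := fun hh => h hh.symm
        simp [Matrix.trace, Matrix.diag, Matrix.single, Matrix.one_apply, h0, h1']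
    rw [Matrix.sum_apply, ← h2, h1, h3]
  refine ⟨Fintype.card (Fin k × X), fun i => K₀ ((Fintype.equivFin (Fin k × X)).symm i), ?_, ?_⟩
  · intro ρ x x'
    rw [hrep ρ x x']
    exact (Equiv.sum_comp (Fintype.equivFin (Fin k × X)).symm
      fun f => (K₀ f * ρ * (K₀ f)ᴴ) x x').symm
  · rw [← hiso]
    exact Equiv.sum_comp (Fintype.equivFin (Fin k × X)).symm fun f => (K₀ f)ᴴ * K₀ f
end MyAux

/-- Proposition 1: if `ψ` and `φ` are compatible and `ψ` divides `φ`,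
then `φ` is anti-degradable. -/
theorem antidegradable_of_compatible_of_divides
    {A B C : Type*} [Fintype A] [Fintype B] [Fintype C]
    [Nonempty A] [Nonempty B] [Nonempty C] [DecidableEq A]
    (ψ : Matrix A A ℂ → Matrix B B ℂ) (hψ : IsQuantumChannel ψ)
    (φ : Matrix A A ℂ → Matrix C C ℂ) (hφ : IsQuantumChannel φ)
    (hcomp : Compatible ψ φ)
    (θ : Matrix B B ℂ → Matrix C C ℂ) (hθ : IsQuantumChannel θ)
    (hdiv : φ = θ ∘ ψ) :
    ∃ (E : Type) (iE : Fintype E), @AntiDegradableWith A C _ _ _ φ E iE := by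
  classical
  obtain ⟨θ₀, hθ₀, hψeq, hφeq⟩ := hcomp
  set kC := Fintype.card C with hkC
  let ε : Fin kC ≃ C := (Fintype.equivFin C).symm
  let Ξ : Matrix (B × C) (B × C) ℂ → Matrix (C × C) (C × C) ℂ :=
    fun M => Matrix.of fun p q : C × C => θ (Matrix.of fun b b' => M (b, p.2) (b', q.2)) p.1 q.1
  let Θ : Matrix A A ℂ → Matrix (C × C) (C × C) ℂ := fun ρ => Ξ (θ₀ ρ)
  have hΞadd : ∀ x y : Matrix (B × C) (B × C) ℂ, Ξ (x + y) = Ξ x + Ξ y := by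
    intro x y
    ext ⟨c, d⟩ ⟨c', d'⟩
    simp only [Ξ, Matrix.of_apply, Matrix.add_apply]
    rw [show (Matrix.of fun b b' => x (b, d) (b', d') + y (b, d) (b', d'))
        = (Matrix.of fun b b' => x (b, d) (b', d')) + (Matrix.of fun b b' => y (b, d) (b', d')) by
      ext b b'; simp]
    rw [hθ.1.map_add]
    simp
  have hΞsmul : ∀ (cc : ℂ) (x : Matrix (B × C) (B × C) ℂ), Ξ (cc • x) = cc • Ξ x := by
    intro cc x
    ext ⟨c, d⟩ ⟨c', d'⟩
    simp only [Ξ, Matrix.of_apply, Matrix.smul_apply]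
    rw [show (Matrix.of fun b b' => cc • x (b, d) (b', d'))
        = cc • (Matrix.of fun b b' => x (b, d) (b', d')) by ext b b'; simp]
    rw [hθ.1.map_smul]
    simp
  have hΘlin : IsLinearMap ℂ Θ :=
    ⟨fun x y => by simp only [Θ, hθ₀.1.map_add, hΞadd],
     fun c x => by simp only [Θ, hθ₀.1.map_smul, hΞsmul]⟩
  have hΞcp : IsCompletelyPositive Ξ := cp_tensor_right θ hθ.2.1
  have hΘcp : IsCompletelyPositive Θ := cp_comp hθ₀.2.1 hΞcp
  have hΞtr : ∀ M : Matrix (B × C) (B × C) ℂ, (Ξ M).trace = M.trace := by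
    intro M
    have h1 : (Ξ M).trace = ∑ d : C, (θ (Matrix.of fun b b' => M (b, d) (b', d))).trace := by
      simp only [Matrix.trace, Matrix.diag, Ξ, Matrix.of_apply, Fintype.sum_prod_type]
      exact Finset.sum_comm
    rw [h1]
    simp only [hθ.2.2]
    simp only [Matrix.trace, Matrix.diag, Matrix.of_apply, Fintype.sum_prod_type]
    exact Finset.sum_comm
  have hΘtr : ∀ ρ : Matrix A A ℂ, (Θ ρ).trace = ρ.trace := by
    intro ρ
    rw [show (Θ ρ).trace = (Ξ (θ₀ ρ)).trace from rfl, hΞtr, hθ₀.2.2]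
  have hΘright : ∀ ρ : Matrix A A ℂ, trRight (Θ ρ) = φ ρ := by
    intro ρ
    have h2 : trRight (θ₀ ρ) = ∑ d : C, Matrix.of fun b b' => θ₀ ρ (b, d) (b', d) := by
      ext b b'; simp [trRight, Matrix.sum_apply]
    have h3 : θ (∑ d : C, Matrix.of fun b b' => θ₀ ρ (b, d) (b', d))
        = ∑ d : C, θ (Matrix.of fun b b' => θ₀ ρ (b, d) (b', d)) :=
      map_sum (IsLinearMap.mk' θ hθ.1) _ Finset.univ
    have h1 : trRight (Θ ρ) = θ (trRight (θ₀ ρ)) := by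
      rw [h2, h3]
      ext c c'
      simp [trRight, Θ, Ξ, Matrix.sum_apply]
    rw [h1, show trRight (θ₀ ρ) = ψ ρ from (congrFun hψeq ρ).symm,
       show θ (ψ ρ) = φ ρ from (congrFun hdiv ρ).symm]
  have hΘleft : ∀ ρ : Matrix A A ℂ, trLeft (Θ ρ) = φ ρ := by
    intro ρ
    have h1 : trLeft (Θ ρ) = trLeft (θ₀ ρ) := by
      ext d d'
      have h := hθ.2.2 (Matrix.of fun b b' => θ₀ ρ (b, d) (b', d'))
      simp only [Matrix.trace, Matrix.diag, Matrix.of_apply] at h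
      simp only [trLeft, Θ, Ξ, Matrix.of_apply]
      exact h
    rw [h1, show trLeft (θ₀ ρ) = φ ρ from (congrFun hφeq ρ).symm]
  obtain ⟨m, K, hK, hKiso⟩ := exists_kraus Θ ⟨hΘlin, hΘcp, hΘtr⟩
  have hm : Nonempty (Fin m) := by
    by_contra hemp
    have hIE : IsEmpty (Fin m) := not_nonempty_iff.mp hemp
    rw [Finset.univ_eq_empty, Finset.sum_empty] at hKiso
    have ha : A := Classical.arbitrary A
    have h0 : (0 : Matrix A A ℂ) ha ha = (1 : Matrix A A ℂ) ha ha := by rw [hKiso]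
    simp [Matrix.one_apply] at h0
  obtain ⟨i0⟩ := hm
  let En : Type := Fin kC × Fin m
  let V : Matrix (C × En) A ℂ :=
    Matrix.of fun p a => K p.2.2 (p.1, ε p.2.1) a
  have hVent : ∀ (ρ : Matrix A A ℂ) (c c' : C) (d0 d0' : Fin kC) (i i' : Fin m),
      (V * ρ * Vᴴ) (c, (d0, i)) (c', (d0', i'))
        = (K i * ρ * (K i')ᴴ) (c, ε d0) (c', ε d0') := by
    intro ρ c c' d0 d0' i i'
    simp [V, Matrix.mul_apply, Matrix.conjTranspose_apply]
  have swap3 : ∀ G : C → Fin kC → Fin m → ℂ,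
      ∑ c : C, ∑ d0 : Fin kC, ∑ i : Fin m, G c d0 i
        = ∑ i : Fin m, ∑ c : C, ∑ d0 : Fin kC, G c d0 i := by
    intro G
    rw [show (∑ c : C, ∑ d0 : Fin kC, ∑ i : Fin m, G c d0 i)
        = ∑ c : C, ∑ i : Fin m, ∑ d0 : Fin kC, G c d0 i from
      Finset.sum_congr rfl fun c _ => Finset.sum_comm]
    exact Finset.sum_comm
  have hVV : Vᴴ * V = 1 := by
    ext a a'
    rw [show (1 : Matrix A A ℂ) a a' = (∑ i : Fin m, (K i)ᴴ * K i) a a' by rw [hKiso]]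
    rw [Matrix.sum_apply]
    have key : ∀ i : Fin m,
        ∑ c : C, ∑ d0 : Fin kC, star (K i (c, ε d0) a) * K i (c, ε d0) a'
          = ((K i)ᴴ * K i) a a' := by
      intro i
      simp only [Matrix.mul_apply, Matrix.conjTranspose_apply]
      rw [Fintype.sum_prod_type]
      refine Finset.sum_congr rfl fun c _ => ?_
      exact Fintype.sum_bijective ε ε.bijective _ _ (fun d0 => rfl)
    have lhs1 : (Vᴴ * V) a a'
        = ∑ c : C, ∑ d0 : Fin kC, ∑ i : Fin m, star (K i (c, ε d0) a) * K i (c, ε d0) a' := by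
      simp only [Matrix.mul_apply, Matrix.conjTranspose_apply, V, Matrix.of_apply]
      rw [Fintype.sum_prod_type]
      refine Finset.sum_congr rfl fun c _ => ?_
      rw [Fintype.sum_prod_type]
    rw [lhs1, swap3]
    exact Finset.sum_congr rfl fun i _ => key i
  have hstine : ∀ ρ : Matrix A A ℂ, φ ρ = trRight (V * ρ * Vᴴ) := by
    intro ρ
    ext c c'
    have h1 : trRight (V * ρ * Vᴴ) c c'
        = ∑ d0 : Fin kC, ∑ i : Fin m, (K i * ρ * (K i)ᴴ) (c, ε d0) (c', ε d0) := by
      simp only [trRight, Matrix.of_apply]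
      rw [Fintype.sum_prod_type]
      exact Finset.sum_congr rfl fun d0 _ =>
        Finset.sum_congr rfl fun i _ => hVent ρ c c' d0 d0 i i
    rw [h1]
    have h2 : ∀ d0 : Fin kC, ∑ i : Fin m, (K i * ρ * (K i)ᴴ) (c, ε d0) (c', ε d0)
        = Θ ρ (c, ε d0) (c', ε d0) := fun d0 => (hK ρ _ _).symm
    simp only [h2]
    rw [Fintype.sum_bijective ε ε.bijective _ (fun d => Θ ρ (c, d) (c', d)) (fun d0 => rfl)]
    rw [show (∑ d : C, Θ ρ (c, d) (c', d)) = trRight (Θ ρ) c c' from rfl, hΘright ρ]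
  let Lam : Matrix En En ℂ → Matrix C C ℂ :=
    fun M => Matrix.of fun d d' : C => ∑ i : Fin m, M (ε.symm d, i) (ε.symm d', i)
  have hLam : IsQuantumChannel Lam := channel_reindexed_trRight ε
  have hLphi : ∀ ρ : Matrix A A ℂ, φ ρ = Lam (trLeft (V * ρ * Vᴴ)) := by
    intro ρ
    ext d d'
    have h1 : Lam (trLeft (V * ρ * Vᴴ)) d d'
        = ∑ i : Fin m, ∑ c : C, (K i * ρ * (K i)ᴴ) (c, d) (c, d') := by
      simp only [Lam, trLeft, Matrix.of_apply]
      refine Finset.sum_congr rfl fun i _ => Finset.sum_congr rfl fun c _ => ?_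
      rw [hVent ρ c c _ _ i i, Equiv.apply_symm_apply, Equiv.apply_symm_apply]
    rw [h1, Finset.sum_comm]
    have h2 : ∀ c : C, ∑ i : Fin m, (K i * ρ * (K i)ᴴ) (c, d) (c, d') = Θ ρ (c, d) (c, d') :=
      fun c => (hK ρ _ _).symm
    simp only [h2]
    rw [show (∑ c : C, Θ ρ (c, d) (c, d')) = trLeft (Θ ρ) d d' from rfl, hΘleft ρ]
  refine ⟨En, inferInstance, ⟨(ε.symm (Classical.arbitrary C), i0)⟩, V,
    ⟨hVV, fun ρ => hstine ρ⟩, Lam, hLam, ?_⟩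
  funext ρ
  exact hLphi ρ

end
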